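/- The first variation of the first principal curvature is given by: at every point of U, d/dt at t=0 of κ̃₁(t) := −(N(t)_α · R(t)_α)/‖R(t)_α‖², where N(t) = (R(t)_α × R(t)_β)/‖R(t)_α × R(t)_β‖, equals −(ϑ̄_α + p·ψ̄)/A₁ − ε̄₁·κ₁. -/

import Mathlib

noncomputable section

/-- Vectors in ℝ³. -/
abbrev V3 : Type := Fin 3 → ℝ

/-- Euclidean dot product on ℝ³. -/
def dot3 (a b : V3) : ℝ := a 0 * b 0 + a 1 * b 1 + a 2 * b 2

/-- Cross product on ℝ³. -/
def cross3 (a b : V3) : V3 :=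
  ![a 1 * b 2 - a 2 * b 1, a 2 * b 0 - a 0 * b 2, a 0 * b 1 - a 1 * b 0]

/-- Euclidean norm on ℝ³. -/
def norm3 (a : V3) : ℝ := Real.sqrt (dot3 a a)

/-- Partial derivative in the first (α) direction. -/
def pd1 {E : Type*} [NormedAddCommGroup E] [NormedSpace ℝ E]
    (f : ℝ × ℝ → E) (x : ℝ × ℝ) : E := fderiv ℝ f x (1, 0)

/-- Partial derivative in the second (β) direction. -/
def pd2 {E : Type*} [NormedAddCommGroup E] [NormedSpace ℝ E]
    (f : ℝ × ℝ → E) (x : ℝ × ℝ) : E := fderiv ℝ f x (0, 1)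

def A₁ (r : ℝ × ℝ → V3) (x : ℝ × ℝ) : ℝ := norm3 (pd1 r x)
def A₂ (r : ℝ × ℝ → V3) (x : ℝ × ℝ) : ℝ := norm3 (pd2 r x)
def e₁ (r : ℝ × ℝ → V3) (x : ℝ × ℝ) : V3 := (A₁ r x)⁻¹ • pd1 r x
def e₂ (r : ℝ × ℝ → V3) (x : ℝ × ℝ) : V3 := (A₂ r x)⁻¹ • pd2 r x
/-- Unit normal N = e₁ × e₂. -/
def NN (r : ℝ × ℝ → V3) (x : ℝ × ℝ) : V3 := cross3 (e₁ r x) (e₂ r x)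
/-- p = (A₁)_β / A₂. -/
def pp (r : ℝ × ℝ → V3) (x : ℝ × ℝ) : ℝ := pd2 (A₁ r) x / A₂ r x
/-- q = (A₂)_α / A₁. -/
def qq (r : ℝ × ℝ → V3) (x : ℝ × ℝ) : ℝ := pd1 (A₂ r) x / A₁ r x
/-- H∘ = −κ₁ A₁. -/
def Ho (r : ℝ × ℝ → V3) (κ₁ : ℝ × ℝ → ℝ) (x : ℝ × ℝ) : ℝ := -κ₁ x * A₁ r x
/-- K∘ = −κ₂ A₂. -/
def Ko (r : ℝ × ℝ → V3) (κ₂ : ℝ × ℝ → ℝ) (x : ℝ × ℝ) : ℝ := -κ₂ x * A₂ r x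

/-- Surface divergence of the tangential field f₁·e₁ + f₂·e₂. -/
def sdiv (r : ℝ × ℝ → V3) (f₁ f₂ : ℝ × ℝ → ℝ) (x : ℝ × ℝ) : ℝ :=
  (pd1 (fun y => f₁ y * A₂ r y) x + pd2 (fun y => f₂ y * A₁ r y) x) / (A₁ r x * A₂ r x)

/-- Surface gradient ∇f = (f_α/A₁)·e₁ + (f_β/A₂)·e₂. -/
def sgrad (r : ℝ × ℝ → V3) (f : ℝ × ℝ → ℝ) (x : ℝ × ℝ) : V3 :=
  (pd1 f x / A₁ r x) • e₁ r x + (pd2 f x / A₂ r x) • e₂ r x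


/-- Variation vector field V = v₁·e₁ + v₂·e₂ + v_n·N. -/
def Vfield (r : ℝ × ℝ → V3) (v₁ v₂ v_n : ℝ × ℝ → ℝ) (y : ℝ × ℝ) : V3 :=
  v₁ y • e₁ r y + v₂ y • e₂ r y + v_n y • NN r y

/-- The deformed surface R(t) = r + t·V. -/
def Rt (r Vf : ℝ × ℝ → V3) (t : ℝ) (y : ℝ × ℝ) : V3 := r y + t • Vf y

/-- Infinitesimal strain ε̄₁ = ((v₁)_α + p v₂ + H∘ v_n)/A₁. -/
def eps1 (r : ℝ × ℝ → V3) (κ₁ : ℝ × ℝ → ℝ) (v₁ v₂ v_n : ℝ × ℝ → ℝ) (x : ℝ × ℝ) : ℝ :=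
  (pd1 v₁ x + pp r x * v₂ x + Ho r κ₁ x * v_n x) / A₁ r x

/-- Infinitesimal strain ε̄₂ = ((v₂)_β + q v₁ + K∘ v_n)/A₂. -/
def eps2 (r : ℝ × ℝ → V3) (κ₂ : ℝ × ℝ → ℝ) (v₁ v₂ v_n : ℝ × ℝ → ℝ) (x : ℝ × ℝ) : ℝ :=
  (pd2 v₂ x + qq r x * v₁ x + Ko r κ₂ x * v_n x) / A₂ r x

/-- Infinitesimal rotation ϑ̄ = (−(v_n)_α + H∘ v₁)/A₁. -/
def thb (r : ℝ × ℝ → V3) (κ₁ : ℝ × ℝ → ℝ) (v₁ v_n : ℝ × ℝ → ℝ) (x : ℝ × ℝ) : ℝ :=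
  (-(pd1 v_n x) + Ho r κ₁ x * v₁ x) / A₁ r x

/-- Infinitesimal rotation ψ̄ = (−(v_n)_β + K∘ v₂)/A₂. -/
def psb (r : ℝ × ℝ → V3) (κ₂ : ℝ × ℝ → ℝ) (v₂ v_n : ℝ × ℝ → ℝ) (x : ℝ × ℝ) : ℝ :=
  (-(pd2 v_n x) + Ko r κ₂ x * v₂ x) / A₂ r x

/-- Shear ω₁ = (v_α − p u)/A₁. -/
def om1 (r : ℝ × ℝ → V3) (u v : ℝ × ℝ → ℝ) (x : ℝ × ℝ) : ℝ :=
  (pd1 v x - pp r x * u x) / A₁ r x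

/-- Shear ω₂ = (u_β − q v)/A₂. -/
def om2 (r : ℝ × ℝ → V3) (u v : ℝ × ℝ → ℝ) (x : ℝ × ℝ) : ℝ :=
  (pd2 u x - qq r x * v x) / A₂ r x

/-- First fundamental form coefficient E. -/
def EE (R : ℝ × ℝ → V3) (x : ℝ × ℝ) : ℝ := dot3 (pd1 R x) (pd1 R x)
/-- First fundamental form coefficient F. -/
def FF (R : ℝ × ℝ → V3) (x : ℝ × ℝ) : ℝ := dot3 (pd1 R x) (pd2 R x)
/-- First fundamental form coefficient G. -/
def GG (R : ℝ × ℝ → V3) (x : ℝ × ℝ) : ℝ := dot3 (pd2 R x) (pd2 R x)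
/-- Unit normal of a parametrized surface. -/
def unitN (R : ℝ × ℝ → V3) (x : ℝ × ℝ) : V3 :=
  (norm3 (cross3 (pd1 R x) (pd2 R x)))⁻¹ • cross3 (pd1 R x) (pd2 R x)
/-- Second fundamental form coefficient e = N·R_αα. -/
def ee (R : ℝ × ℝ → V3) (x : ℝ × ℝ) : ℝ := dot3 (unitN R x) (pd1 (pd1 R) x)
/-- Second fundamental form coefficient f = N·R_αβ. -/
def ff (R : ℝ × ℝ → V3) (x : ℝ × ℝ) : ℝ := dot3 (unitN R x) (pd2 (pd1 R) x)
/-- Second fundamental form coefficient g = N·R_ββ. -/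
def gg (R : ℝ × ℝ → V3) (x : ℝ × ℝ) : ℝ := dot3 (unitN R x) (pd2 (pd2 R) x)
/-- Mean curvature H = (eG − 2fF + gE)/(2(EG − F²)). -/
def meanH (R : ℝ × ℝ → V3) (x : ℝ × ℝ) : ℝ :=
  (ee R x * GG R x - 2 * ff R x * FF R x + gg R x * EE R x) /
    (2 * (EE R x * GG R x - FF R x ^ 2))
/-- κ̃₁ = −(N_α·R_α)/‖R_α‖². -/
def princ1 (R : ℝ × ℝ → V3) (x : ℝ × ℝ) : ℝ :=
  -(dot3 (pd1 (unitN R) x) (pd1 R x)) / (norm3 (pd1 R x)) ^ 2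
/-- κ̃₂ = −(N_β·R_β)/‖R_β‖². -/
def princ2 (R : ℝ × ℝ → V3) (x : ℝ × ℝ) : ℝ :=
  -(dot3 (pd2 (unitN R) x) (pd2 R x)) / (norm3 (pd2 R x)) ^ 2

/-- Linear Weingarten functional integrand (a·H + b)·dA + (c/3)·R·(R_α × R_β). -/
def Phi (a b c : ℝ) (R : ℝ × ℝ → V3) (x : ℝ × ℝ) : ℝ :=
  (a * meanH R x + b) * norm3 (cross3 (pd1 R x) (pd2 R x)) +
    c / 3 * dot3 (R x) (cross3 (pd1 R x) (pd2 R x))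



variable {x : ℝ × ℝ} {f g : ℝ × ℝ → V3} {h k : ℝ × ℝ → ℝ} {v : ℝ × ℝ}

lemma dot3_self_nonneg (a : V3) : 0 ≤ dot3 a a := by
  simp only [dot3]
  nlinarith [mul_self_nonneg (a 0), mul_self_nonneg (a 1), mul_self_nonneg (a 2)]

lemma dot3_self_pos {a : V3} (ha : a ≠ 0) : 0 < dot3 a a := by
  rcases Function.ne_iff.mp ha with ⟨i, hi⟩
  simp only [dot3]
  fin_cases i <;> simp at hi <;>
    nlinarith [mul_self_nonneg (a 0), mul_self_nonneg (a 1), mul_self_nonneg (a 2),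
      mul_self_pos.mpr hi]

lemma norm3_sq (a : V3) : norm3 a ^ 2 = dot3 a a := Real.sq_sqrt (dot3_self_nonneg a)

lemma norm3_pos {a : V3} (ha : a ≠ 0) : 0 < norm3 a := Real.sqrt_pos.mpr (dot3_self_pos ha)

lemma vec3_ext {u v : V3} (h0 : u 0 = v 0) (h1 : u 1 = v 1) (h2 : u 2 = v 2) : u = v := by
  funext i; fin_cases i <;> assumption

lemma diffAt_apply (hf : DifferentiableAt ℝ f x) (i : Fin 3) :
    DifferentiableAt ℝ (fun y => f y i) x := differentiableAt_pi.mp hf i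

lemma fderiv_apply_comp (hf : DifferentiableAt ℝ f x) (i : Fin 3) :
    fderiv ℝ (fun y => f y i) x v = fderiv ℝ f x v i := by
  rw [fderiv_pi (fun i => diffAt_apply hf i)]; rfl

lemma fd_mul (hf : DifferentiableAt ℝ f x) (hg : DifferentiableAt ℝ g x) (i j : Fin 3) :
    fderiv ℝ (fun y => f y i * g y j) x v
      = fderiv ℝ f x v i * g x j + f x i * fderiv ℝ g x v j := by
  rw [fderiv_fun_mul (diffAt_apply hf i) (diffAt_apply hg j)]
  simp [fderiv_apply_comp hf i, fderiv_apply_comp hg j]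
  ring

lemma differentiableAt_dot3 (hf : DifferentiableAt ℝ f x) (hg : DifferentiableAt ℝ g x) :
    DifferentiableAt ℝ (fun y => dot3 (f y) (g y)) x := by
  simp only [dot3]
  exact (((diffAt_apply hf 0).mul (diffAt_apply hg 0)).add
    ((diffAt_apply hf 1).mul (diffAt_apply hg 1))).add
    ((diffAt_apply hf 2).mul (diffAt_apply hg 2))

lemma fderiv_dot3 (hf : DifferentiableAt ℝ f x) (hg : DifferentiableAt ℝ g x) :
    fderiv ℝ (fun y => dot3 (f y) (g y)) x v
      = dot3 (fderiv ℝ f x v) (g x) + dot3 (f x) (fderiv ℝ g x v) := by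
  have d0 : DifferentiableAt ℝ (fun y => f y 0 * g y 0) x :=
    (diffAt_apply hf 0).mul (diffAt_apply hg 0)
  have d1 : DifferentiableAt ℝ (fun y => f y 1 * g y 1) x :=
    (diffAt_apply hf 1).mul (diffAt_apply hg 1)
  have d2 : DifferentiableAt ℝ (fun y => f y 2 * g y 2) x :=
    (diffAt_apply hf 2).mul (diffAt_apply hg 2)
  have e1 : fderiv ℝ (fun y => f y 0 * g y 0 + f y 1 * g y 1) x v
      = fderiv ℝ (fun y => f y 0 * g y 0) x v + fderiv ℝ (fun y => f y 1 * g y 1) x v := by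
    rw [fderiv_fun_add d0 d1]; rfl
  have e2 : fderiv ℝ (fun y => (f y 0 * g y 0 + f y 1 * g y 1) + f y 2 * g y 2) x v
      = fderiv ℝ (fun y => f y 0 * g y 0 + f y 1 * g y 1) x v
        + fderiv ℝ (fun y => f y 2 * g y 2) x v := by
    rw [fderiv_fun_add (d0.fun_add d1) d2]; rfl
  simp only [dot3]
  rw [e2, e1, fd_mul hf hg 0 0, fd_mul hf hg 1 1, fd_mul hf hg 2 2]
  ring

lemma diffAt_cross3_comp (hf : DifferentiableAt ℝ f x) (hg : DifferentiableAt ℝ g x)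
    (i : Fin 3) : DifferentiableAt ℝ (fun y => cross3 (f y) (g y) i) x := by
  fin_cases i
  · exact ((diffAt_apply hf 1).mul (diffAt_apply hg 2)).sub
      ((diffAt_apply hf 2).mul (diffAt_apply hg 1))
  · exact ((diffAt_apply hf 2).mul (diffAt_apply hg 0)).sub
      ((diffAt_apply hf 0).mul (diffAt_apply hg 2))
  · exact ((diffAt_apply hf 0).mul (diffAt_apply hg 1)).sub
      ((diffAt_apply hf 1).mul (diffAt_apply hg 0))

lemma differentiableAt_cross3 (hf : DifferentiableAt ℝ f x) (hg : DifferentiableAt ℝ g x) :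
    DifferentiableAt ℝ (fun y => cross3 (f y) (g y)) x :=
  differentiableAt_pi.mpr (diffAt_cross3_comp hf hg)

lemma fderiv_cross3 (hf : DifferentiableAt ℝ f x) (hg : DifferentiableAt ℝ g x) :
    fderiv ℝ (fun y => cross3 (f y) (g y)) x v
      = cross3 (fderiv ℝ f x v) (g x) + cross3 (f x) (fderiv ℝ g x v) := by
  have key : ∀ i : Fin 3, fderiv ℝ (fun y => cross3 (f y) (g y)) x v i
      = fderiv ℝ (fun y => cross3 (f y) (g y) i) x v :=
    fun i => (fderiv_apply_comp (differentiableAt_cross3 hf hg) i).symm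
  apply vec3_ext
  · rw [show ((cross3 (fderiv ℝ f x v) (g x) + cross3 (f x) (fderiv ℝ g x v)) 0)
        = (fderiv ℝ f x v 1 * g x 2 - fderiv ℝ f x v 2 * g x 1)
          + (f x 1 * fderiv ℝ g x v 2 - f x 2 * fderiv ℝ g x v 1) from rfl]
    rw [key 0, show (fun y => cross3 (f y) (g y) 0)
        = fun y => f y 1 * g y 2 - f y 2 * g y 1 from rfl,
      fderiv_fun_sub ((diffAt_apply hf 1).fun_mul (diffAt_apply hg 2))
        ((diffAt_apply hf 2).fun_mul (diffAt_apply hg 1))]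
    show fderiv ℝ (fun y => f y 1 * g y 2) x v - fderiv ℝ (fun y => f y 2 * g y 1) x v = _
    rw [fd_mul hf hg 1 2, fd_mul hf hg 2 1]; ring
  · rw [show ((cross3 (fderiv ℝ f x v) (g x) + cross3 (f x) (fderiv ℝ g x v)) 1)
        = (fderiv ℝ f x v 2 * g x 0 - fderiv ℝ f x v 0 * g x 2)
          + (f x 2 * fderiv ℝ g x v 0 - f x 0 * fderiv ℝ g x v 2) from rfl]
    rw [key 1, show (fun y => cross3 (f y) (g y) 1)
        = fun y => f y 2 * g y 0 - f y 0 * g y 2 from rfl,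
      fderiv_fun_sub ((diffAt_apply hf 2).fun_mul (diffAt_apply hg 0))
        ((diffAt_apply hf 0).fun_mul (diffAt_apply hg 2))]
    show fderiv ℝ (fun y => f y 2 * g y 0) x v - fderiv ℝ (fun y => f y 0 * g y 2) x v = _
    rw [fd_mul hf hg 2 0, fd_mul hf hg 0 2]; ring
  · rw [show ((cross3 (fderiv ℝ f x v) (g x) + cross3 (f x) (fderiv ℝ g x v)) 2)
        = (fderiv ℝ f x v 0 * g x 1 - fderiv ℝ f x v 1 * g x 0)
          + (f x 0 * fderiv ℝ g x v 1 - f x 1 * fderiv ℝ g x v 0) from rfl]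
    rw [key 2, show (fun y => cross3 (f y) (g y) 2)
        = fun y => f y 0 * g y 1 - f y 1 * g y 0 from rfl,
      fderiv_fun_sub ((diffAt_apply hf 0).fun_mul (diffAt_apply hg 1))
        ((diffAt_apply hf 1).fun_mul (diffAt_apply hg 0))]
    show fderiv ℝ (fun y => f y 0 * g y 1) x v - fderiv ℝ (fun y => f y 1 * g y 0) x v = _
    rw [fd_mul hf hg 0 1, fd_mul hf hg 1 0]; ring

lemma fderiv_smul3 (hh : DifferentiableAt ℝ h x) (hf : DifferentiableAt ℝ f x) :
    fderiv ℝ (fun y => h y • f y) x v = fderiv ℝ h x v • f x + h x • fderiv ℝ f x v := by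
  rw [fderiv_fun_smul hh hf]
  simp [ContinuousLinearMap.smul_apply]
  abel


-- Piece 2: smoothness plumbing
section Smooth

variable {U : Set (ℝ × ℝ)} {f g : ℝ × ℝ → V3} {h : ℝ × ℝ → ℝ} {x : ℝ × ℝ}

abbrev Sm {E : Type*} [NormedAddCommGroup E] [NormedSpace ℝ E] (f : ℝ × ℝ → E)
    (U : Set (ℝ × ℝ)) : Prop := ContDiffOn ℝ ((⊤ : ℕ∞) : WithTop ℕ∞) f U

lemma Sm.dAt {E : Type*} [NormedAddCommGroup E] [NormedSpace ℝ E] {f : ℝ × ℝ → E}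
    (hf : Sm f U) (hU : IsOpen U) (hx : x ∈ U) : DifferentiableAt ℝ f x :=
  ((hf.contDiffAt (hU.mem_nhds hx)).differentiableAt (by simp))

lemma Sm.pd1 {E : Type*} [NormedAddCommGroup E] [NormedSpace ℝ E] {f : ℝ × ℝ → E}
    (hf : Sm f U) (hU : IsOpen U) : Sm (pd1 f) U := by
  have : ContDiffOn ℝ ((⊤ : ℕ∞) : WithTop ℕ∞) (fderiv ℝ f) U :=
    hf.fderiv_of_isOpen hU (by exact_mod_cast le_top)
  exact this.clm_apply contDiffOn_const

lemma Sm.pd2 {E : Type*} [NormedAddCommGroup E] [NormedSpace ℝ E] {f : ℝ × ℝ → E}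
    (hf : Sm f U) (hU : IsOpen U) : Sm (pd2 f) U := by
  have : ContDiffOn ℝ ((⊤ : ℕ∞) : WithTop ℕ∞) (fderiv ℝ f) U :=
    hf.fderiv_of_isOpen hU (by exact_mod_cast le_top)
  exact this.clm_apply contDiffOn_const

lemma Sm.apply (hf : Sm f U) (i : Fin 3) : Sm (fun y => f y i) U :=
  contDiffOn_pi.mp hf i

lemma Sm.dot3 (hf : Sm f U) (hg : Sm g U) : Sm (fun y => dot3 (f y) (g y)) U := by
  simp only [_root_.dot3]
  exact (((hf.apply 0).mul (hg.apply 0)).add ((hf.apply 1).mul (hg.apply 1))).add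
    ((hf.apply 2).mul (hg.apply 2))

lemma Sm.cross3 (hf : Sm f U) (hg : Sm g U) : Sm (fun y => cross3 (f y) (g y)) U := by
  apply contDiffOn_pi.mpr
  intro i
  fin_cases i
  · exact ((hf.apply 1).mul (hg.apply 2)).sub ((hf.apply 2).mul (hg.apply 1))
  · exact ((hf.apply 2).mul (hg.apply 0)).sub ((hf.apply 0).mul (hg.apply 2))
  · exact ((hf.apply 0).mul (hg.apply 1)).sub ((hf.apply 1).mul (hg.apply 0))

lemma Sm.smul3 {h : ℝ × ℝ → ℝ} (hh : Sm h U) (hf : Sm f U) :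
    Sm (fun y => h y • f y) U := hh.smul hf

end Smooth
-- Piece 3: geometry smoothness and Rt derivatives
section Geo

variable {U : Set (ℝ × ℝ)} {r : ℝ × ℝ → V3} {v₁ v₂ v_n : ℝ × ℝ → ℝ} {x : ℝ × ℝ}

lemma smOfTop {E : Type*} [NormedAddCommGroup E] [NormedSpace ℝ E] {f : ℝ × ℝ → E}
    (hf : ContDiffOn ℝ (⊤ : ℕ∞) f U) : Sm f U := hf.of_le (by simp)

lemma Sm.sqrt {h : ℝ × ℝ → ℝ} (hh : Sm h U) (hU : IsOpen U) (hne : ∀ y ∈ U, h y ≠ 0) :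
    Sm (fun y => Real.sqrt (h y)) U := fun y hy =>
  ((Real.contDiffAt_sqrt (hne y hy)).comp y (hh.contDiffAt (hU.mem_nhds hy))).contDiffWithinAt

lemma smA1 (hU : IsOpen U) (hr : Sm r U) (hne1 : ∀ y ∈ U, pd1 r y ≠ 0) :
    Sm (A₁ r) U := by
  show Sm (fun y => Real.sqrt (dot3 (pd1 r y) (pd1 r y))) U
  exact Sm.sqrt ((hr.pd1 hU).dot3 (hr.pd1 hU)) hU
    (fun y hy => ne_of_gt (dot3_self_pos (hne1 y hy)))

lemma smA2 (hU : IsOpen U) (hr : Sm r U) (hne2 : ∀ y ∈ U, pd2 r y ≠ 0) :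
    Sm (A₂ r) U := by
  show Sm (fun y => Real.sqrt (dot3 (pd2 r y) (pd2 r y))) U
  exact Sm.sqrt ((hr.pd2 hU).dot3 (hr.pd2 hU)) hU
    (fun y hy => ne_of_gt (dot3_self_pos (hne2 y hy)))

lemma A1_pos (hne1 : ∀ y ∈ U, pd1 r y ≠ 0) (hx : x ∈ U) : 0 < A₁ r x :=
  norm3_pos (hne1 x hx)

lemma A2_pos (hne2 : ∀ y ∈ U, pd2 r y ≠ 0) (hx : x ∈ U) : 0 < A₂ r x :=
  norm3_pos (hne2 x hx)

lemma sme1 (hU : IsOpen U) (hr : Sm r U) (hne1 : ∀ y ∈ U, pd1 r y ≠ 0) :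
    Sm (e₁ r) U := by
  show Sm (fun y => (A₁ r y)⁻¹ • pd1 r y) U
  exact Sm.smul3 ((smA1 hU hr hne1).inv
    (fun y hy => ne_of_gt (A1_pos hne1 hy))) (hr.pd1 hU)

lemma sme2 (hU : IsOpen U) (hr : Sm r U) (hne2 : ∀ y ∈ U, pd2 r y ≠ 0) :
    Sm (e₂ r) U := by
  show Sm (fun y => (A₂ r y)⁻¹ • pd2 r y) U
  exact Sm.smul3 ((smA2 hU hr hne2).inv
    (fun y hy => ne_of_gt (A2_pos hne2 hy))) (hr.pd2 hU)

lemma smNN (hU : IsOpen U) (hr : Sm r U) (hne1 : ∀ y ∈ U, pd1 r y ≠ 0)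
    (hne2 : ∀ y ∈ U, pd2 r y ≠ 0) : Sm (NN r) U := by
  show Sm (fun y => cross3 (e₁ r y) (e₂ r y)) U
  exact (sme1 hU hr hne1).cross3 (sme2 hU hr hne2)

lemma smVf (hU : IsOpen U) (hr : Sm r U) (hne1 : ∀ y ∈ U, pd1 r y ≠ 0)
    (hne2 : ∀ y ∈ U, pd2 r y ≠ 0) (hv₁ : Sm v₁ U) (hv₂ : Sm v₂ U) (hvn : Sm v_n U) :
    Sm (Vfield r v₁ v₂ v_n) U := by
  show Sm (fun y => v₁ y • e₁ r y + v₂ y • e₂ r y + v_n y • NN r y) U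
  exact ((hv₁.smul3 (sme1 hU hr hne1)).add (hv₂.smul3 (sme2 hU hr hne2))).add
    (hvn.smul3 (smNN hU hr hne1 hne2))

-- pd of Rt
lemma pd1_Rt {Vf : ℝ × ℝ → V3} (hU : IsOpen U) (hr : Sm r U) (hVf : Sm Vf U)
    (t : ℝ) (hx : x ∈ U) :
    pd1 (Rt r Vf t) x = pd1 r x + t • pd1 Vf x := by
  show fderiv ℝ (fun y => r y + t • Vf y) x (1, 0) = _
  rw [fderiv_fun_add (hr.dAt hU hx) ((hVf.dAt hU hx).fun_const_smul t),
    fderiv_fun_const_smul (hVf.dAt hU hx)]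
  rfl

lemma pd2_Rt {Vf : ℝ × ℝ → V3} (hU : IsOpen U) (hr : Sm r U) (hVf : Sm Vf U)
    (t : ℝ) (hx : x ∈ U) :
    pd2 (Rt r Vf t) x = pd2 r x + t • pd2 Vf x := by
  show fderiv ℝ (fun y => r y + t • Vf y) x (0, 1) = _
  rw [fderiv_fun_add (hr.dAt hU hx) ((hVf.dAt hU hx).fun_const_smul t),
    fderiv_fun_const_smul (hVf.dAt hU hx)]
  rfl

lemma pd1_congr_open {E : Type*} [NormedAddCommGroup E] [NormedSpace ℝ E]
    {f g : ℝ × ℝ → E} (hU : IsOpen U) (hx : x ∈ U) (hfg : ∀ y ∈ U, f y = g y) :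
    pd1 f x = pd1 g x := by
  have : f =ᶠ[nhds x] g := by
    filter_upwards [hU.mem_nhds hx] using hfg
  show fderiv ℝ f x (1, 0) = fderiv ℝ g x (1, 0)
  rw [this.fderiv_eq]

lemma pd2_congr_open {E : Type*} [NormedAddCommGroup E] [NormedSpace ℝ E]
    {f g : ℝ × ℝ → E} (hU : IsOpen U) (hx : x ∈ U) (hfg : ∀ y ∈ U, f y = g y) :
    pd2 f x = pd2 g x := by
  have : f =ᶠ[nhds x] g := by
    filter_upwards [hU.mem_nhds hx] using hfg
  show fderiv ℝ f x (0, 1) = fderiv ℝ g x (0, 1)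
  rw [this.fderiv_eq]

lemma pd1_pd1_Rt {Vf : ℝ × ℝ → V3} (hU : IsOpen U) (hr : Sm r U) (hVf : Sm Vf U)
    (t : ℝ) (hx : x ∈ U) :
    pd1 (pd1 (Rt r Vf t)) x = pd1 (pd1 r) x + t • pd1 (pd1 Vf) x := by
  rw [pd1_congr_open hU hx (fun y hy => pd1_Rt hU hr hVf t hy)]
  show fderiv ℝ (fun y => pd1 r y + t • pd1 Vf y) x (1, 0) = _
  rw [fderiv_fun_add ((hr.pd1 hU).dAt hU hx) (((hVf.pd1 hU).dAt hU hx).fun_const_smul t),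
    fderiv_fun_const_smul ((hVf.pd1 hU).dAt hU hx)]
  rfl

end Geo
-- Piece 4: algebra mini-lemmas and fixed-t reduction
lemma dot3_smul_left (s : ℝ) (a b : V3) : dot3 (s • a) b = s * dot3 a b := by
  simp [dot3]; ring

lemma dot3_cross_left (u v : V3) : dot3 (cross3 u v) u = 0 := by
  simp [dot3, cross3]; ring

lemma dot3_comm (a b : V3) : dot3 a b = dot3 b a := by simp [dot3]; ring

lemma lagrange3 (u v : V3) :
    dot3 (cross3 u v) (cross3 u v) = dot3 u u * dot3 v v - dot3 u v ^ 2 := by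
  simp [dot3, cross3]; ring

section Fixt

variable {U : Set (ℝ × ℝ)} {r Vf : ℝ × ℝ → V3} {x : ℝ × ℝ}

lemma princ1_Rt_eq (hU : IsOpen U) (hr : Sm r U) (hVf : Sm Vf U) (hx : x ∈ U) (t : ℝ)
    (hQw : 0 < dot3 (cross3 (pd1 r x + t • pd1 Vf x) (pd2 r x + t • pd2 Vf x))
      (cross3 (pd1 r x + t • pd1 Vf x) (pd2 r x + t • pd2 Vf x)))
    (hQa : 0 < dot3 (pd1 r x + t • pd1 Vf x) (pd1 r x + t • pd1 Vf x)) :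
    princ1 (Rt r Vf t) x =
      (Real.sqrt (dot3 (cross3 (pd1 r x + t • pd1 Vf x) (pd2 r x + t • pd2 Vf x))
          (cross3 (pd1 r x + t • pd1 Vf x) (pd2 r x + t • pd2 Vf x))))⁻¹
        * dot3 (cross3 (pd1 r x + t • pd1 Vf x) (pd2 r x + t • pd2 Vf x))
            (pd1 (pd1 r) x + t • pd1 (pd1 Vf) x)
        / dot3 (pd1 r x + t • pd1 Vf x) (pd1 r x + t • pd1 Vf x) := by
  set R := Rt r Vf t with hR
  set a' := pd1 r x + t • pd1 Vf x with ha'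
  set b' := pd2 r x + t • pd2 Vf x with hb'
  set c' := pd1 (pd1 r) x + t • pd1 (pd1 Vf) x with hc'
  set w' := cross3 a' b' with hw'
  -- pd formulas
  have hev1 : pd1 R =ᶠ[nhds x] (fun y => pd1 r y + t • pd1 Vf y) := by
    filter_upwards [hU.mem_nhds hx] with y hy using pd1_Rt hU hr hVf t hy
  have hev2 : pd2 R =ᶠ[nhds x] (fun y => pd2 r y + t • pd2 Vf y) := by
    filter_upwards [hU.mem_nhds hx] with y hy using pd2_Rt hU hr hVf t hy
  have hd1' : DifferentiableAt ℝ (fun y => pd1 r y + t • pd1 Vf y) x :=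
    ((hr.pd1 hU).dAt hU hx).add (((hVf.pd1 hU).dAt hU hx).const_smul t)
  have hd2' : DifferentiableAt ℝ (fun y => pd2 r y + t • pd2 Vf y) x :=
    ((hr.pd2 hU).dAt hU hx).add (((hVf.pd2 hU).dAt hU hx).const_smul t)
  have hd1 : DifferentiableAt ℝ (pd1 R) x := hev1.differentiableAt_iff.mpr hd1'
  have hd2 : DifferentiableAt ℝ (pd2 R) x := hev2.differentiableAt_iff.mpr hd2'
  have hpd1x : pd1 R x = a' := pd1_Rt hU hr hVf t hx
  have hpd2x : pd2 R x = b' := pd2_Rt hU hr hVf t hx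
  have hpd11x : pd1 (pd1 R) x = c' := pd1_pd1_Rt hU hr hVf t hx
  have hwdiff : DifferentiableAt ℝ (fun y => cross3 (pd1 R y) (pd2 R y)) x :=
    differentiableAt_cross3 hd1 hd2
  have hwx : cross3 (pd1 R x) (pd2 R x) = w' := by rw [hpd1x, hpd2x]
  have hQw' : dot3 (cross3 (pd1 R x) (pd2 R x)) (cross3 (pd1 R x) (pd2 R x)) ≠ 0 := by
    rw [hwx]; exact ne_of_gt hQw
  have hdotdiff : DifferentiableAt ℝ (fun y => dot3 (cross3 (pd1 R y) (pd2 R y))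
      (cross3 (pd1 R y) (pd2 R y))) x := differentiableAt_dot3 hwdiff hwdiff
  have hsq : DifferentiableAt ℝ (fun y => norm3 (cross3 (pd1 R y) (pd2 R y))) x := by
    show DifferentiableAt ℝ (fun y => Real.sqrt (dot3 (cross3 (pd1 R y) (pd2 R y))
      (cross3 (pd1 R y) (pd2 R y)))) x
    exact hdotdiff.sqrt hQw'
  have hnormne : norm3 (cross3 (pd1 R x) (pd2 R x)) ≠ 0 := by
    rw [hwx]; exact ne_of_gt (Real.sqrt_pos.mpr (by rw [← hwx] at hQw ⊢; exact hQw))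
  have hUdiff : DifferentiableAt ℝ (unitN R) x := by
    show DifferentiableAt ℝ
      (fun y => (norm3 (cross3 (pd1 R y) (pd2 R y)))⁻¹ • cross3 (pd1 R y) (pd2 R y)) x
    exact ((hsq.inv hnormne).smul hwdiff)
  have hzero : (fun y => dot3 (unitN R y) (pd1 R y)) = (fun _ => (0 : ℝ)) := by
    funext y
    show dot3 ((norm3 (cross3 (pd1 R y) (pd2 R y)))⁻¹ • cross3 (pd1 R y) (pd2 R y))
      (pd1 R y) = 0
    rw [dot3_smul_left, dot3_cross_left, mul_zero]
  have hprod : (0 : ℝ) = dot3 (pd1 (unitN R) x) (pd1 R x)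
      + dot3 (unitN R x) (pd1 (pd1 R) x) := by
    have h0 : pd1 (fun y => dot3 (unitN R y) (pd1 R y)) x = 0 := by
      rw [hzero]; show fderiv ℝ (fun _ => (0:ℝ)) x (1,0) = 0; rw [fderiv_fun_const]; rfl
    rw [← h0]
    show fderiv ℝ (fun y => dot3 (unitN R y) (pd1 R y)) x (1,0) = _
    rw [fderiv_dot3 hUdiff hd1]
    rfl
  have hUx : unitN R x = (Real.sqrt (dot3 w' w'))⁻¹ • w' := by
    show (norm3 (cross3 (pd1 R x) (pd2 R x)))⁻¹ • cross3 (pd1 R x) (pd2 R x) = _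
    rw [hwx]; rfl
  show -(dot3 (pd1 (unitN R) x) (pd1 R x)) / (norm3 (pd1 R x)) ^ 2 = _
  rw [show dot3 (pd1 (unitN R) x) (pd1 R x) = -(dot3 (unitN R x) (pd1 (pd1 R) x)) by
    linarith [hprod]]
  rw [norm3_sq, hpd1x, hpd11x, hUx, dot3_smul_left]
  field_simp

end Fixt
-- Piece 5: derivative at t = 0
lemma evpos_poly4 (qw0 qw1 qw2 qw3 qw4 : ℝ) (hqw0pos : 0 < qw0) :
    ∀ᶠ t in nhds (0:ℝ), 0 < qw0 + qw1*t + qw2*t^2 + qw3*t^3 + qw4*t^4 := by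
  have hc : Continuous (fun t : ℝ => qw0 + qw1*t + qw2*t^2 + qw3*t^3 + qw4*t^4) := by
    fun_prop
  have h := (hc.continuousAt (x := (0:ℝ))).eventually_mem
    (show Set.Ioi (0:ℝ) ∈ nhds ((fun t : ℝ => qw0 + qw1*t + qw2*t^2 + qw3*t^3 + qw4*t^4) 0) by
      norm_num; exact Ioi_mem_nhds hqw0pos)
  filter_upwards [h] with t ht using ht

lemma hasDerivAt_poly4 (c0 c1 c2 c3 c4 : ℝ) :
    HasDerivAt (fun t : ℝ => c0 + c1*t + c2*t^2 + c3*t^3 + c4*t^4) c1 0 := by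
  have h : HasDerivAt (fun t : ℝ => c0 + c1 * id t + c2*t^2 + c3*t^3 + c4*t^4)
      (0 + c1 * 1 + c2*(2*0^(2-1)) + c3*(3*0^(3-1)) + c4*(4*0^(4-1))) 0 :=
    ((((hasDerivAt_const (0:ℝ) c0).add ((hasDerivAt_id (0:ℝ)).const_mul c1)).add
      ((hasDerivAt_pow 2 (0:ℝ)).const_mul c2)).add
      ((hasDerivAt_pow 3 (0:ℝ)).const_mul c3)).add
      ((hasDerivAt_pow 4 (0:ℝ)).const_mul c4)
  simp only [id_eq] at h
  convert h using 1
  norm_num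

section DerivT

variable {U : Set (ℝ × ℝ)} {r Vf : ℝ × ℝ → V3} {x : ℝ × ℝ}

lemma deriv_princ1_explicit (hU : IsOpen U) (hr : Sm r U) (hVf : Sm Vf U) (hx : x ∈ U)
    (horthx : dot3 (pd1 r x) (pd2 r x) = 0)
    (ha : pd1 r x ≠ 0) (hb : pd2 r x ≠ 0) :
    deriv (fun t => princ1 (Rt r Vf t) x) 0 =
      ((-(2 * dot3 (cross3 (pd1 r x) (pd2 r x))
              (cross3 (pd1 r x) (pd2 Vf x) + cross3 (pd1 Vf x) (pd2 r x))
            / (2 * Real.sqrt (dot3 (cross3 (pd1 r x) (pd2 r x)) (cross3 (pd1 r x) (pd2 r x)))))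
          / Real.sqrt (dot3 (cross3 (pd1 r x) (pd2 r x)) (cross3 (pd1 r x) (pd2 r x))) ^ 2
          * dot3 (cross3 (pd1 r x) (pd2 r x)) (pd1 (pd1 r) x)
        + (Real.sqrt (dot3 (cross3 (pd1 r x) (pd2 r x)) (cross3 (pd1 r x) (pd2 r x))))⁻¹
          * (dot3 (cross3 (pd1 r x) (pd2 r x)) (pd1 (pd1 Vf) x)
             + dot3 (cross3 (pd1 r x) (pd2 Vf x) + cross3 (pd1 Vf x) (pd2 r x)) (pd1 (pd1 r) x)))
        * dot3 (pd1 r x) (pd1 r x)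
       - (Real.sqrt (dot3 (cross3 (pd1 r x) (pd2 r x)) (cross3 (pd1 r x) (pd2 r x))))⁻¹
          * dot3 (cross3 (pd1 r x) (pd2 r x)) (pd1 (pd1 r) x)
          * (2 * dot3 (pd1 r x) (pd1 Vf x)))
      / dot3 (pd1 r x) (pd1 r x) ^ 2 := by
  set a := pd1 r x with hadef
  set b := pd2 r x with hbdef
  set A := pd1 Vf x with hAdef
  set B := pd2 Vf x with hBdef
  set c := pd1 (pd1 r) x with hcdef
  set C := pd1 (pd1 Vf) x with hCdef
  set w0 := cross3 a b with hw0def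
  set w1 := cross3 a B + cross3 A b with hw1def
  set w2 := cross3 A B with hw2def
  set qa0 := dot3 a a with hqa0
  set qa1 := 2 * dot3 a A with hqa1
  set qa2 := dot3 A A with hqa2
  set qw0 := dot3 w0 w0 with hqw0
  set qw1 := 2 * dot3 w0 w1 with hqw1
  set qw2 := dot3 w1 w1 + 2 * dot3 w0 w2 with hqw2
  set qw3 := 2 * dot3 w1 w2 with hqw3
  set qw4 := dot3 w2 w2 with hqw4
  set p0 := dot3 w0 c with hp0
  set p1 := dot3 w0 C + dot3 w1 c with hp1
  set p2 := dot3 w1 C + dot3 w2 c with hp2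
  set p3 := dot3 w2 C with hp3
  have hqa0pos : 0 < qa0 := dot3_self_pos ha
  have hqw0pos : 0 < qw0 := by
    have hl := lagrange3 a b
    rw [hqw0, hw0def, hl, horthx]
    nlinarith [dot3_self_pos ha, dot3_self_pos hb]
  have hQa : ∀ t : ℝ, dot3 (a + t • A) (a + t • A)
      = qa0 + qa1*t + qa2*t^2 + 0*t^3 + 0*t^4 := by
    intro t
    simp only [hqa0, hqa1, hqa2, dot3, Pi.add_apply, Pi.smul_apply, smul_eq_mul]
    ring
  have hQw : ∀ t : ℝ, dot3 (cross3 (a + t • A) (b + t • B)) (cross3 (a + t • A) (b + t • B))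
      = qw0 + qw1*t + qw2*t^2 + qw3*t^3 + qw4*t^4 := by
    intro t
    simp only [hqw0, hqw1, hqw2, hqw3, hqw4, hw0def, hw1def, hw2def, dot3, cross3,
      Pi.add_apply, Pi.smul_apply, smul_eq_mul, Matrix.cons_val_zero, Matrix.cons_val_one,
      Matrix.head_cons, Matrix.cons_val_two, Matrix.tail_cons]
    ring
  have hP : ∀ t : ℝ, dot3 (cross3 (a + t • A) (b + t • B)) (c + t • C)
      = p0 + p1*t + p2*t^2 + p3*t^3 + 0*t^4 := by
    intro t
    simp only [hp0, hp1, hp2, hp3, hw0def, hw1def, hw2def, dot3, cross3,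
      Pi.add_apply, Pi.smul_apply, smul_eq_mul, Matrix.cons_val_zero, Matrix.cons_val_one,
      Matrix.head_cons, Matrix.cons_val_two, Matrix.tail_cons]
    ring
  -- eventual equality
  have hev : (fun t => princ1 (Rt r Vf t) x) =ᶠ[nhds (0:ℝ)]
      (fun t => (Real.sqrt (qw0 + qw1*t + qw2*t^2 + qw3*t^3 + qw4*t^4))⁻¹
        * (p0 + p1*t + p2*t^2 + p3*t^3 + 0*t^4)
        / (qa0 + qa1*t + qa2*t^2 + 0*t^3 + 0*t^4)) := by
    filter_upwards [evpos_poly4 qw0 qw1 qw2 qw3 qw4 hqw0pos,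
      evpos_poly4 qa0 qa1 qa2 0 0 hqa0pos] with t h1 h2
    have e1 := princ1_Rt_eq hU hr hVf hx t (by rw [hQw t]; exact h1) (by rw [hQa t]; exact h2)
    rw [e1, hQw t, hP t, hQa t]
  rw [hev.deriv_eq]
  -- derivative computation
  have hQwD := hasDerivAt_poly4 qw0 qw1 qw2 qw3 qw4
  have hQaD := hasDerivAt_poly4 qa0 qa1 qa2 0 0
  have hPD := hasDerivAt_poly4 p0 p1 p2 p3 0
  have hQw0ne : (fun t : ℝ => qw0 + qw1*t + qw2*t^2 + qw3*t^3 + qw4*t^4) 0 ≠ 0 := by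
    show qw0 + qw1*0 + qw2*0^2 + qw3*0^3 + qw4*0^4 ≠ 0
    norm_num
    exact ne_of_gt hqw0pos
  have hsq := hQwD.sqrt hQw0ne
  have hsqne : Real.sqrt ((fun t : ℝ => qw0 + qw1*t + qw2*t^2 + qw3*t^3 + qw4*t^4) 0) ≠ 0 := by
    show Real.sqrt (qw0 + qw1*0 + qw2*0^2 + qw3*0^3 + qw4*0^4) ≠ 0
    norm_num
    exact ne_of_gt (Real.sqrt_pos.mpr hqw0pos)
  have hinv := hsq.inv hsqne
  have hnum := hinv.mul hPD
  have hQa0ne : (fun t : ℝ => qa0 + qa1*t + qa2*t^2 + 0*t^3 + 0*t^4) 0 ≠ 0 := by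
    show qa0 + qa1*0 + qa2*0^2 + 0*0^3 + 0*0^4 ≠ 0
    norm_num
    exact ne_of_gt hqa0pos
  have hdiv := hnum.div hQaD hQa0ne
  refine hdiv.deriv.trans ?_
  norm_num

end DerivT
-- Piece 6a: scalar pd helpers
section PdHelpers

variable {x v : ℝ × ℝ} {f g : ℝ × ℝ → ℝ} {F G : ℝ × ℝ → V3}

lemma fderiv_mul_scalar (hf : DifferentiableAt ℝ f x) (hg : DifferentiableAt ℝ g x) :
    fderiv ℝ (fun y => f y * g y) x v = fderiv ℝ f x v * g x + f x * fderiv ℝ g x v := by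
  rw [fderiv_fun_mul hf hg]
  simp [ContinuousLinearMap.smul_apply]
  ring

lemma fderiv_inv_comp (hf : DifferentiableAt ℝ f x) (hne : f x ≠ 0) :
    fderiv ℝ (fun y => (f y)⁻¹) x v = -(fderiv ℝ f x v) / (f x)^2 := by
  have e : (fun y => (f y)⁻¹) = (fun z : ℝ => z⁻¹) ∘ f := rfl
  rw [e, fderiv_comp x (differentiableAt_inv hne) hf, fderiv_inv]
  simp [ContinuousLinearMap.smulRight_apply]
  ring

lemma fderiv_sqrt_comp (hf : DifferentiableAt ℝ f x) (hne : f x ≠ 0) :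
    fderiv ℝ (fun y => Real.sqrt (f y)) x v = fderiv ℝ f x v / (2 * Real.sqrt (f x)) := by
  rw [fderiv_sqrt hf hne]
  simp [ContinuousLinearMap.smul_apply]
  ring

lemma fderiv_neg_comp (hf : DifferentiableAt ℝ f x) :
    fderiv ℝ (fun y => -(f y)) x v = -(fderiv ℝ f x v) := by
  rw [fderiv_fun_neg]
  rfl

end PdHelpers

-- Piece 6b: more dot3/cross3 algebra
lemma dot3_cross_right (u v : V3) : dot3 (cross3 u v) v = 0 := by
  simp [dot3, cross3]; ring

lemma dot3_smul_right (s : ℝ) (a b : V3) : dot3 a (s • b) = s * dot3 a b := by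
  simp [dot3]; ring

lemma dot3_add_left (a b c : V3) : dot3 (a + b) c = dot3 a c + dot3 b c := by
  simp [dot3]; ring

lemma dot3_add_right (a b c : V3) : dot3 a (b + c) = dot3 a b + dot3 a c := by
  simp [dot3]; ring

lemma cross3_smul_smul (s t : ℝ) (u v : V3) :
    cross3 (s • u) (t • v) = (s * t) • cross3 u v := by
  apply vec3_ext <;> simp [cross3] <;> ring

lemma binet (u v p q : V3) :
    dot3 (cross3 u v) (cross3 p q) = dot3 u p * dot3 v q - dot3 u q * dot3 v p := by
  simp [dot3, cross3]; ring

lemma tripleL3a (a b c A : V3) :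
    dot3 a a * dot3 (cross3 A b) c
      = dot3 A a * dot3 (cross3 a b) c - dot3 A (cross3 a b) * dot3 a c
        + dot3 a b * dot3 (cross3 A a) c := by
  simp [dot3, cross3]; ring

lemma tripleL3b (a b c B : V3) :
    dot3 b b * dot3 (cross3 a B) c
      = dot3 B b * dot3 (cross3 a b) c - dot3 B (cross3 a b) * dot3 b c
        - dot3 a b * dot3 (cross3 B b) c := by
  simp [dot3, cross3]; ring
-- Piece 7: frame identities
section Frame

variable {U : Set (ℝ × ℝ)} {r : ℝ × ℝ → V3} {κ₁ κ₂ : ℝ × ℝ → ℝ}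
  {v₁ v₂ v_n : ℝ × ℝ → ℝ} {x y : ℝ × ℝ}

lemma NN_eq (r : ℝ × ℝ → V3) (y : ℝ × ℝ) :
    NN r y = ((A₁ r y)⁻¹ * (A₂ r y)⁻¹) • cross3 (pd1 r y) (pd2 r y) := by
  show cross3 ((A₁ r y)⁻¹ • pd1 r y) ((A₂ r y)⁻¹ • pd2 r y) = _
  exact cross3_smul_smul _ _ _ _

lemma dot3_NN_pd1 (r : ℝ × ℝ → V3) (y : ℝ × ℝ) : dot3 (NN r y) (pd1 r y) = 0 := by
  rw [NN_eq, dot3_smul_left, dot3_cross_left, mul_zero]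

lemma dot3_NN_pd2 (r : ℝ × ℝ → V3) (y : ℝ × ℝ) : dot3 (NN r y) (pd2 r y) = 0 := by
  rw [NN_eq, dot3_smul_left, dot3_cross_right, mul_zero]

lemma A1_sq (r : ℝ × ℝ → V3) (y : ℝ × ℝ) : A₁ r y ^ 2 = dot3 (pd1 r y) (pd1 r y) :=
  norm3_sq _

lemma A2_sq (r : ℝ × ℝ → V3) (y : ℝ × ℝ) : A₂ r y ^ 2 = dot3 (pd2 r y) (pd2 r y) :=
  norm3_sq _

section WithHyps

variable (hU : IsOpen U) (hr : Sm r U)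
  (hne1 : ∀ y ∈ U, pd1 r y ≠ 0) (hne2 : ∀ y ∈ U, pd2 r y ≠ 0)
  (horth : ∀ y ∈ U, dot3 (pd1 r y) (pd2 r y) = 0)
  (hN1 : ∀ y ∈ U, pd1 (NN r) y = (-κ₁ y) • pd1 r y)
  (hN2 : ∀ y ∈ U, pd2 (NN r) y = (-κ₂ y) • pd2 r y)

include hU hr hne1 hne2

-- pd of the identically-zero functions dot3 (NN r) (pd r)
lemma dot3_NN_c (hN1 : ∀ y ∈ U, pd1 (NN r) y = (-κ₁ y) • pd1 r y) (hy : y ∈ U) :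
    dot3 (NN r y) (pd1 (pd1 r) y) = κ₁ y * A₁ r y ^ 2 := by
  have hzero : (fun z => dot3 (NN r z) (pd1 r z)) = (fun _ => (0:ℝ)) :=
    funext fun z => dot3_NN_pd1 r z
  have h0 : pd1 (fun z => dot3 (NN r z) (pd1 r z)) y = 0 := by
    rw [hzero]; show fderiv ℝ (fun _ => (0:ℝ)) y (1,0) = 0; rw [fderiv_fun_const]; rfl
  have hprod : pd1 (fun z => dot3 (NN r z) (pd1 r z)) y
      = dot3 (pd1 (NN r) y) (pd1 r y) + dot3 (NN r y) (pd1 (pd1 r) y) := by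
    show fderiv ℝ _ y (1,0) = _
    rw [fderiv_dot3 ((smNN hU hr hne1 hne2).dAt hU hy) ((hr.pd1 hU).dAt hU hy)]
    rfl
  rw [hprod, hN1 y hy, dot3_smul_left] at h0
  rw [A1_sq]
  nlinarith [h0]

lemma dot3_NN_dmix (horth : ∀ y ∈ U, dot3 (pd1 r y) (pd2 r y) = 0)
    (hN1 : ∀ y ∈ U, pd1 (NN r) y = (-κ₁ y) • pd1 r y) (hy : y ∈ U) :
    dot3 (NN r y) (pd1 (pd2 r) y) = 0 := by
  have hzero : (fun z => dot3 (NN r z) (pd2 r z)) = (fun _ => (0:ℝ)) :=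
    funext fun z => dot3_NN_pd2 r z
  have h0 : pd1 (fun z => dot3 (NN r z) (pd2 r z)) y = 0 := by
    rw [hzero]; show fderiv ℝ (fun _ => (0:ℝ)) y (1,0) = 0; rw [fderiv_fun_const]; rfl
  have hprod : pd1 (fun z => dot3 (NN r z) (pd2 r z)) y
      = dot3 (pd1 (NN r) y) (pd2 r y) + dot3 (NN r y) (pd1 (pd2 r) y) := by
    show fderiv ℝ _ y (1,0) = _
    rw [fderiv_dot3 ((smNN hU hr hne1 hne2).dAt hU hy) ((hr.pd2 hU).dAt hU hy)]
    rfl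
  rw [hprod, hN1 y hy, dot3_smul_left, horth y hy] at h0
  linarith [h0]

lemma dot3_NN_d (horth : ∀ y ∈ U, dot3 (pd1 r y) (pd2 r y) = 0)
    (hN2 : ∀ y ∈ U, pd2 (NN r) y = (-κ₂ y) • pd2 r y) (hy : y ∈ U) :
    dot3 (NN r y) (pd2 (pd1 r) y) = 0 := by
  have hzero : (fun z => dot3 (NN r z) (pd1 r z)) = (fun _ => (0:ℝ)) :=
    funext fun z => dot3_NN_pd1 r z
  have h0 : pd2 (fun z => dot3 (NN r z) (pd1 r z)) y = 0 := by
    rw [hzero]; show fderiv ℝ (fun _ => (0:ℝ)) y (0,1) = 0; rw [fderiv_fun_const]; rfl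
  have hprod : pd2 (fun z => dot3 (NN r z) (pd1 r z)) y
      = dot3 (pd2 (NN r) y) (pd1 r y) + dot3 (NN r y) (pd2 (pd1 r) y) := by
    show fderiv ℝ _ y (0,1) = _
    rw [fderiv_dot3 ((smNN hU hr hne1 hne2).dAt hU hy) ((hr.pd1 hU).dAt hU hy)]
    rfl
  rw [hprod, hN2 y hy, dot3_smul_left, dot3_comm (pd2 r y) (pd1 r y), horth y hy] at h0
  linarith [h0]

lemma dot3_NN_bb (hN2 : ∀ y ∈ U, pd2 (NN r) y = (-κ₂ y) • pd2 r y) (hy : y ∈ U) :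
    dot3 (NN r y) (pd2 (pd2 r) y) = κ₂ y * A₂ r y ^ 2 := by
  have hzero : (fun z => dot3 (NN r z) (pd2 r z)) = (fun _ => (0:ℝ)) :=
    funext fun z => dot3_NN_pd2 r z
  have h0 : pd2 (fun z => dot3 (NN r z) (pd2 r z)) y = 0 := by
    rw [hzero]; show fderiv ℝ (fun _ => (0:ℝ)) y (0,1) = 0; rw [fderiv_fun_const]; rfl
  have hprod : pd2 (fun z => dot3 (NN r z) (pd2 r z)) y
      = dot3 (pd2 (NN r) y) (pd2 r y) + dot3 (NN r y) (pd2 (pd2 r) y) := by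
    show fderiv ℝ _ y (0,1) = _
    rw [fderiv_dot3 ((smNN hU hr hne1 hne2).dAt hU hy) ((hr.pd2 hU).dAt hU hy)]
    rfl
  rw [hprod, hN2 y hy, dot3_smul_left] at h0
  rw [A2_sq]
  nlinarith [h0]

lemma pd1_A1 (hy : y ∈ U) :
    pd1 (A₁ r) y = dot3 (pd1 (pd1 r) y) (pd1 r y) / A₁ r y := by
  have hd := (hr.pd1 hU).dAt hU hy
  have hdd : DifferentiableAt ℝ (fun z => dot3 (pd1 r z) (pd1 r z)) y :=
    differentiableAt_dot3 hd hd
  have hne : dot3 (pd1 r y) (pd1 r y) ≠ 0 := ne_of_gt (dot3_self_pos (hne1 y hy))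
  show fderiv ℝ (fun z => Real.sqrt (dot3 (pd1 r z) (pd1 r z))) y (1,0) = _
  rw [fderiv_sqrt_comp hdd hne]
  have : fderiv ℝ (fun z => dot3 (pd1 r z) (pd1 r z)) y (1,0)
      = dot3 (pd1 (pd1 r) y) (pd1 r y) + dot3 (pd1 r y) (pd1 (pd1 r) y) := by
    rw [fderiv_dot3 hd hd]; rfl
  rw [this, dot3_comm (pd1 r y) (pd1 (pd1 r) y)]
  show _ = _ / A₁ r y
  have hA1 : A₁ r y = Real.sqrt (dot3 (pd1 r y) (pd1 r y)) := rfl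
  rw [hA1]
  ring

lemma pd2_A1 (hy : y ∈ U) :
    pd2 (A₁ r) y = dot3 (pd2 (pd1 r) y) (pd1 r y) / A₁ r y := by
  have hd := (hr.pd1 hU).dAt hU hy
  have hdd : DifferentiableAt ℝ (fun z => dot3 (pd1 r z) (pd1 r z)) y :=
    differentiableAt_dot3 hd hd
  have hne : dot3 (pd1 r y) (pd1 r y) ≠ 0 := ne_of_gt (dot3_self_pos (hne1 y hy))
  show fderiv ℝ (fun z => Real.sqrt (dot3 (pd1 r z) (pd1 r z))) y (0,1) = _
  rw [fderiv_sqrt_comp hdd hne]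
  have : fderiv ℝ (fun z => dot3 (pd1 r z) (pd1 r z)) y (0,1)
      = dot3 (pd2 (pd1 r) y) (pd1 r y) + dot3 (pd1 r y) (pd2 (pd1 r) y) := by
    rw [fderiv_dot3 hd hd]; rfl
  rw [this, dot3_comm (pd1 r y) (pd2 (pd1 r) y)]
  have hA1 : A₁ r y = Real.sqrt (dot3 (pd1 r y) (pd1 r y)) := rfl
  rw [hA1]
  ring

end WithHyps

end Frame
-- Piece 8: Vfield derivative expansion and rewriting of thb, psb, eps1
section Frame2

variable {U : Set (ℝ × ℝ)} {r : ℝ × ℝ → V3} {κ₁ κ₂ : ℝ × ℝ → ℝ}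
  {v₁ v₂ v_n : ℝ × ℝ → ℝ} {x y : ℝ × ℝ}

variable (hU : IsOpen U) (hr : Sm r U)
  (hne1 : ∀ y ∈ U, pd1 r y ≠ 0) (hne2 : ∀ y ∈ U, pd2 r y ≠ 0)

include hU hr hne1 hne2

lemma pd1_e1 (hy : y ∈ U) :
    pd1 (e₁ r) y = (pd1 (fun z => (A₁ r z)⁻¹) y) • pd1 r y
      + (A₁ r y)⁻¹ • pd1 (pd1 r) y := by
  have hinv : DifferentiableAt ℝ (fun z => (A₁ r z)⁻¹) y :=
    ((smA1 hU hr hne1).dAt hU hy).inv (ne_of_gt (A1_pos hne1 hy))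
  show fderiv ℝ (fun z => (A₁ r z)⁻¹ • pd1 r z) y (1,0) = _
  rw [fderiv_smul3 hinv ((hr.pd1 hU).dAt hU hy)]
  rfl

lemma pd2_e1 (hy : y ∈ U) :
    pd2 (e₁ r) y = (pd2 (fun z => (A₁ r z)⁻¹) y) • pd1 r y
      + (A₁ r y)⁻¹ • pd2 (pd1 r) y := by
  have hinv : DifferentiableAt ℝ (fun z => (A₁ r z)⁻¹) y :=
    ((smA1 hU hr hne1).dAt hU hy).inv (ne_of_gt (A1_pos hne1 hy))
  show fderiv ℝ (fun z => (A₁ r z)⁻¹ • pd1 r z) y (0,1) = _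
  rw [fderiv_smul3 hinv ((hr.pd1 hU).dAt hU hy)]
  rfl

lemma pd1_e2 (hy : y ∈ U) :
    pd1 (e₂ r) y = (pd1 (fun z => (A₂ r z)⁻¹) y) • pd2 r y
      + (A₂ r y)⁻¹ • pd1 (pd2 r) y := by
  have hinv : DifferentiableAt ℝ (fun z => (A₂ r z)⁻¹) y :=
    ((smA2 hU hr hne2).dAt hU hy).inv (ne_of_gt (A2_pos hne2 hy))
  show fderiv ℝ (fun z => (A₂ r z)⁻¹ • pd2 r z) y (1,0) = _
  rw [fderiv_smul3 hinv ((hr.pd2 hU).dAt hU hy)]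
  rfl

lemma pd2_e2 (hy : y ∈ U) :
    pd2 (e₂ r) y = (pd2 (fun z => (A₂ r z)⁻¹) y) • pd2 r y
      + (A₂ r y)⁻¹ • pd2 (pd2 r) y := by
  have hinv : DifferentiableAt ℝ (fun z => (A₂ r z)⁻¹) y :=
    ((smA2 hU hr hne2).dAt hU hy).inv (ne_of_gt (A2_pos hne2 hy))
  show fderiv ℝ (fun z => (A₂ r z)⁻¹ • pd2 r z) y (0,1) = _
  rw [fderiv_smul3 hinv ((hr.pd2 hU).dAt hU hy)]
  rfl

lemma pd1_Vfield (hv₁ : Sm v₁ U) (hv₂ : Sm v₂ U) (hvn : Sm v_n U) (hy : y ∈ U) :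
    pd1 (Vfield r v₁ v₂ v_n) y
      = (pd1 v₁ y • e₁ r y + v₁ y • pd1 (e₁ r) y)
        + (pd1 v₂ y • e₂ r y + v₂ y • pd1 (e₂ r) y)
        + (pd1 v_n y • NN r y + v_n y • pd1 (NN r) y) := by
  have d1 : DifferentiableAt ℝ (fun z => v₁ z • e₁ r z) y :=
    (hv₁.dAt hU hy).smul ((sme1 hU hr hne1).dAt hU hy)
  have d2 : DifferentiableAt ℝ (fun z => v₂ z • e₂ r z) y :=
    (hv₂.dAt hU hy).smul ((sme2 hU hr hne2).dAt hU hy)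
  have d3 : DifferentiableAt ℝ (fun z => v_n z • NN r z) y :=
    (hvn.dAt hU hy).smul ((smNN hU hr hne1 hne2).dAt hU hy)
  show fderiv ℝ (fun z => v₁ z • e₁ r z + v₂ z • e₂ r z + v_n z • NN r z) y (1,0) = _
  rw [fderiv_fun_add (d1.fun_add d2) d3, fderiv_fun_add d1 d2]
  have e1' : fderiv ℝ (fun z => v₁ z • e₁ r z) y (1,0)
      = pd1 v₁ y • e₁ r y + v₁ y • pd1 (e₁ r) y :=
    fderiv_smul3 (hv₁.dAt hU hy) ((sme1 hU hr hne1).dAt hU hy)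
  have e2' : fderiv ℝ (fun z => v₂ z • e₂ r z) y (1,0)
      = pd1 v₂ y • e₂ r y + v₂ y • pd1 (e₂ r) y :=
    fderiv_smul3 (hv₂.dAt hU hy) ((sme2 hU hr hne2).dAt hU hy)
  have e3' : fderiv ℝ (fun z => v_n z • NN r z) y (1,0)
      = pd1 v_n y • NN r y + v_n y • pd1 (NN r) y :=
    fderiv_smul3 (hvn.dAt hU hy) ((smNN hU hr hne1 hne2).dAt hU hy)
  show (fderiv ℝ (fun z => v₁ z • e₁ r z) y + fderiv ℝ (fun z => v₂ z • e₂ r z) y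
      + fderiv ℝ (fun z => v_n z • NN r z) y) (1,0) = _
  simp only [ContinuousLinearMap.add_apply]
  rw [e1', e2', e3']

lemma pd2_Vfield (hv₁ : Sm v₁ U) (hv₂ : Sm v₂ U) (hvn : Sm v_n U) (hy : y ∈ U) :
    pd2 (Vfield r v₁ v₂ v_n) y
      = (pd2 v₁ y • e₁ r y + v₁ y • pd2 (e₁ r) y)
        + (pd2 v₂ y • e₂ r y + v₂ y • pd2 (e₂ r) y)
        + (pd2 v_n y • NN r y + v_n y • pd2 (NN r) y) := by
  have d1 : DifferentiableAt ℝ (fun z => v₁ z • e₁ r z) y :=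
    (hv₁.dAt hU hy).smul ((sme1 hU hr hne1).dAt hU hy)
  have d2 : DifferentiableAt ℝ (fun z => v₂ z • e₂ r z) y :=
    (hv₂.dAt hU hy).smul ((sme2 hU hr hne2).dAt hU hy)
  have d3 : DifferentiableAt ℝ (fun z => v_n z • NN r z) y :=
    (hvn.dAt hU hy).smul ((smNN hU hr hne1 hne2).dAt hU hy)
  show fderiv ℝ (fun z => v₁ z • e₁ r z + v₂ z • e₂ r z + v_n z • NN r z) y (0,1) = _
  rw [fderiv_fun_add (d1.fun_add d2) d3, fderiv_fun_add d1 d2]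
  have e1' : fderiv ℝ (fun z => v₁ z • e₁ r z) y (0,1)
      = pd2 v₁ y • e₁ r y + v₁ y • pd2 (e₁ r) y :=
    fderiv_smul3 (hv₁.dAt hU hy) ((sme1 hU hr hne1).dAt hU hy)
  have e2' : fderiv ℝ (fun z => v₂ z • e₂ r z) y (0,1)
      = pd2 v₂ y • e₂ r y + v₂ y • pd2 (e₂ r) y :=
    fderiv_smul3 (hv₂.dAt hU hy) ((sme2 hU hr hne2).dAt hU hy)
  have e3' : fderiv ℝ (fun z => v_n z • NN r z) y (0,1)
      = pd2 v_n y • NN r y + v_n y • pd2 (NN r) y :=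
    fderiv_smul3 (hvn.dAt hU hy) ((smNN hU hr hne1 hne2).dAt hU hy)
  show (fderiv ℝ (fun z => v₁ z • e₁ r z) y + fderiv ℝ (fun z => v₂ z • e₂ r z) y
      + fderiv ℝ (fun z => v_n z • NN r z) y) (0,1) = _
  simp only [ContinuousLinearMap.add_apply]
  rw [e1', e2', e3']

end Frame2
-- Piece 9: rewriting thb, psb, eps1 and Clairaut
section Frame3

variable {U : Set (ℝ × ℝ)} {r : ℝ × ℝ → V3} {κ₁ κ₂ : ℝ × ℝ → ℝ}
  {v₁ v₂ v_n : ℝ × ℝ → ℝ} {x y : ℝ × ℝ}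

variable (hU : IsOpen U) (hr : Sm r U)
  (hne1 : ∀ y ∈ U, pd1 r y ≠ 0) (hne2 : ∀ y ∈ U, pd2 r y ≠ 0)
  (horth : ∀ y ∈ U, dot3 (pd1 r y) (pd2 r y) = 0)
  (hN1 : ∀ y ∈ U, pd1 (NN r) y = (-κ₁ y) • pd1 r y)
  (hN2 : ∀ y ∈ U, pd2 (NN r) y = (-κ₂ y) • pd2 r y)
  (hv₁ : Sm v₁ U) (hv₂ : Sm v₂ U) (hvn : Sm v_n U)

include hU hr hne1 hne2

lemma dot3_e1_NN (hy : y ∈ U) : dot3 (e₁ r y) (NN r y) = 0 := by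
  show dot3 ((A₁ r y)⁻¹ • pd1 r y) (NN r y) = 0
  rw [dot3_smul_left, dot3_comm, dot3_NN_pd1, mul_zero]

lemma dot3_e2_NN (hy : y ∈ U) : dot3 (e₂ r y) (NN r y) = 0 := by
  show dot3 ((A₂ r y)⁻¹ • pd2 r y) (NN r y) = 0
  rw [dot3_smul_left, dot3_comm, dot3_NN_pd2, mul_zero]

lemma dot3_NN_self (horth : ∀ y ∈ U, dot3 (pd1 r y) (pd2 r y) = 0) (hy : y ∈ U) :
    dot3 (NN r y) (NN r y) = 1 := by
  rw [NN_eq, dot3_smul_left, dot3_smul_right, lagrange3, horth y hy,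
    ← A1_sq, ← A2_sq]
  have h1 := A1_pos hne1 hy
  have h2 := A2_pos hne2 hy
  field_simp
  ring

include hN1 hv₁ hv₂ hvn horth in
lemma thb_eq (hy : y ∈ U) :
    thb r κ₁ v₁ v_n y
      = -(dot3 (pd1 (Vfield r v₁ v₂ v_n) y) (NN r y)) / A₁ r y := by
  have hA1 := A1_pos hne1 hy
  have hS : dot3 (pd1 (Vfield r v₁ v₂ v_n) y) (NN r y)
      = pd1 v_n y + v₁ y * (κ₁ y * A₁ r y) := by
    rw [pd1_Vfield hU hr hne1 hne2 hv₁ hv₂ hvn hy]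
    rw [dot3_add_left, dot3_add_left, dot3_add_left, dot3_add_left, dot3_add_left,
      dot3_smul_left, dot3_smul_left, dot3_smul_left, dot3_smul_left, dot3_smul_left,
      dot3_smul_left]
    rw [dot3_e1_NN hU hr hne1 hne2 hy, dot3_e2_NN hU hr hne1 hne2 hy,
      dot3_NN_self hU hr hne1 hne2 horth hy]
    have hpe1 : dot3 (pd1 (e₁ r) y) (NN r y) = κ₁ y * A₁ r y := by
      rw [pd1_e1 hU hr hne1 hne2 hy, dot3_add_left, dot3_smul_left, dot3_smul_left,
        dot3_comm (pd1 r y), dot3_NN_pd1,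
        dot3_comm (pd1 (pd1 r) y), dot3_NN_c hU hr hne1 hne2 hN1 hy]
      field_simp
      ring
    have hpe2 : dot3 (pd1 (e₂ r) y) (NN r y) = 0 := by
      rw [pd1_e2 hU hr hne1 hne2 hy, dot3_add_left, dot3_smul_left, dot3_smul_left,
        dot3_comm (pd2 r y), dot3_NN_pd2,
        dot3_comm (pd1 (pd2 r) y), dot3_NN_dmix hU hr hne1 hne2 horth hN1 hy]
      ring
    have hpNN : dot3 (pd1 (NN r) y) (NN r y) = 0 := by
      rw [hN1 y hy, dot3_smul_left, dot3_comm, dot3_NN_pd1, mul_zero]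
    rw [hpe1, hpe2, hpNN]
    ring
  rw [hS]
  show (-(pd1 v_n y) + Ho r κ₁ y * v₁ y) / A₁ r y = _
  show (-(pd1 v_n y) + -κ₁ y * A₁ r y * v₁ y) / A₁ r y = _
  field_simp
  ring

include hN2 hv₁ hv₂ hvn horth in
lemma psb_eq (hy : y ∈ U) :
    psb r κ₂ v₂ v_n y
      = -(dot3 (pd2 (Vfield r v₁ v₂ v_n) y) (NN r y)) / A₂ r y := by
  have hA2 := A2_pos hne2 hy
  have hS : dot3 (pd2 (Vfield r v₁ v₂ v_n) y) (NN r y)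
      = pd2 v_n y + v₂ y * (κ₂ y * A₂ r y) := by
    rw [pd2_Vfield hU hr hne1 hne2 hv₁ hv₂ hvn hy]
    rw [dot3_add_left, dot3_add_left, dot3_add_left, dot3_add_left, dot3_add_left,
      dot3_smul_left, dot3_smul_left, dot3_smul_left, dot3_smul_left, dot3_smul_left,
      dot3_smul_left]
    rw [dot3_e1_NN hU hr hne1 hne2 hy, dot3_e2_NN hU hr hne1 hne2 hy,
      dot3_NN_self hU hr hne1 hne2 horth hy]
    have hpe1 : dot3 (pd2 (e₁ r) y) (NN r y) = 0 := by
      rw [pd2_e1 hU hr hne1 hne2 hy, dot3_add_left, dot3_smul_left, dot3_smul_left,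
        dot3_comm (pd1 r y), dot3_NN_pd1,
        dot3_comm (pd2 (pd1 r) y), dot3_NN_d hU hr hne1 hne2 horth hN2 hy]
      ring
    have hpe2 : dot3 (pd2 (e₂ r) y) (NN r y) = κ₂ y * A₂ r y := by
      rw [pd2_e2 hU hr hne1 hne2 hy, dot3_add_left, dot3_smul_left, dot3_smul_left,
        dot3_comm (pd2 r y), dot3_NN_pd2,
        dot3_comm (pd2 (pd2 r) y), dot3_NN_bb hU hr hne1 hne2 hN2 hy]
      field_simp
      ring
    have hpNN : dot3 (pd2 (NN r) y) (NN r y) = 0 := by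
      rw [hN2 y hy, dot3_smul_left, dot3_comm, dot3_NN_pd2, mul_zero]
    rw [hpe1, hpe2, hpNN]
    ring
  rw [hS]
  show (-(pd2 v_n y) + Ko r κ₂ y * v₂ y) / A₂ r y = _
  show (-(pd2 v_n y) + -κ₂ y * A₂ r y * v₂ y) / A₂ r y = _
  field_simp
  ring

lemma clairaut (hx : x ∈ U) : pd1 (pd2 r) x = pd2 (pd1 r) x := by
  have hsym : IsSymmSndFDerivAt ℝ r x :=
    (hr.contDiffAt (hU.mem_nhds hx)).isSymmSndFDerivAt
      (by rw [minSmoothness_of_isRCLikeNormedField]; exact WithTop.coe_le_coe.mpr le_top)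
  have hsm : ContDiffOn ℝ ((⊤:ℕ∞) : WithTop ℕ∞) (fderiv ℝ r) U :=
    hr.fderiv_of_isOpen hU (by exact_mod_cast le_top)
  have hdf : DifferentiableAt ℝ (fderiv ℝ r) x :=
    (hsm.contDiffAt (hU.mem_nhds hx)).differentiableAt (by simp)
  have h1 : pd1 (pd2 r) x = fderiv ℝ (fderiv ℝ r) x (1,0) (0,1) := by
    show fderiv ℝ (fun y => (fderiv ℝ r y) (0,1)) x (1,0) = _
    rw [fderiv_clm_apply hdf (differentiableAt_const _)]
    simp
  have h2 : pd2 (pd1 r) x = fderiv ℝ (fderiv ℝ r) x (0,1) (1,0) := by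
    show fderiv ℝ (fun y => (fderiv ℝ r y) (1,0)) x (0,1) = _
    rw [fderiv_clm_apply hdf (differentiableAt_const _)]
    simp
  rw [h1, h2, hsym (1,0) (0,1)]

end Frame3
-- Piece 10: eps1, pd1 of thb, and c·b + a·d = 0
section Frame4

variable {U : Set (ℝ × ℝ)} {r : ℝ × ℝ → V3} {κ₁ κ₂ : ℝ × ℝ → ℝ}
  {v₁ v₂ v_n : ℝ × ℝ → ℝ} {x : ℝ × ℝ}

variable (hU : IsOpen U) (hr : Sm r U)
  (hne1 : ∀ y ∈ U, pd1 r y ≠ 0) (hne2 : ∀ y ∈ U, pd2 r y ≠ 0)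
  (horth : ∀ y ∈ U, dot3 (pd1 r y) (pd2 r y) = 0)
  (hN1 : ∀ y ∈ U, pd1 (NN r) y = (-κ₁ y) • pd1 r y)
  (hv₁ : Sm v₁ U) (hv₂ : Sm v₂ U) (hvn : Sm v_n U)

include hU hr hne1 hne2

lemma pd1_A1_inv (hx : x ∈ U) :
    pd1 (fun z => (A₁ r z)⁻¹) x
      = -(dot3 (pd1 (pd1 r) x) (pd1 r x) / A₁ r x) / A₁ r x ^ 2 := by
  show fderiv ℝ (fun z => (A₁ r z)⁻¹) x (1,0) = _
  rw [fderiv_inv_comp ((smA1 hU hr hne1).dAt hU hx) (ne_of_gt (A1_pos hne1 hx))]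
  have : fderiv ℝ (A₁ r) x (1,0) = pd1 (A₁ r) x := rfl
  rw [this, pd1_A1 hU hr hne1 hne2 hx]

include horth hN1 hv₁ hv₂ hvn in
lemma eps1_eq (hx : x ∈ U) :
    eps1 r κ₁ v₁ v₂ v_n x
      = dot3 (pd1 (Vfield r v₁ v₂ v_n) x) (pd1 r x) / A₁ r x ^ 2 := by
  have hA1 := A1_pos hne1 hx
  have hA2 := A2_pos hne2 hx
  have hsq1 := A1_sq r x
  have hT : dot3 (pd1 (Vfield r v₁ v₂ v_n) x) (pd1 r x)
      = pd1 v₁ x * A₁ r x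
        + v₂ x * ((A₂ r x)⁻¹ * dot3 (pd2 (pd1 r) x) (pd1 r x))
        + v_n x * (-κ₁ x * A₁ r x ^ 2) := by
    rw [pd1_Vfield hU hr hne1 hne2 hv₁ hv₂ hvn hx]
    rw [dot3_add_left, dot3_add_left, dot3_add_left, dot3_add_left, dot3_add_left,
      dot3_smul_left, dot3_smul_left, dot3_smul_left, dot3_smul_left, dot3_smul_left,
      dot3_smul_left]
    have he1a : dot3 (e₁ r x) (pd1 r x) = A₁ r x := by
      show dot3 ((A₁ r x)⁻¹ • pd1 r x) (pd1 r x) = A₁ r x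
      rw [dot3_smul_left, ← hsq1]
      field_simp
    have hpe1a : dot3 (pd1 (e₁ r) x) (pd1 r x) = 0 := by
      rw [pd1_e1 hU hr hne1 hne2 hx, dot3_add_left, dot3_smul_left, dot3_smul_left,
        pd1_A1_inv hU hr hne1 hne2 hx, ← hsq1]
      field_simp
      ring
    have he2a : dot3 (e₂ r x) (pd1 r x) = 0 := by
      show dot3 ((A₂ r x)⁻¹ • pd2 r x) (pd1 r x) = 0
      rw [dot3_smul_left, dot3_comm, horth x hx, mul_zero]
    have hpe2a : dot3 (pd1 (e₂ r) x) (pd1 r x)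
        = (A₂ r x)⁻¹ * dot3 (pd2 (pd1 r) x) (pd1 r x) := by
      rw [pd1_e2 hU hr hne1 hne2 hx, dot3_add_left, dot3_smul_left, dot3_smul_left,
        dot3_comm (pd2 r x), horth x hx, clairaut hU hr hne1 hne2 hx]
      ring
    have hNa : dot3 (NN r x) (pd1 r x) = 0 := dot3_NN_pd1 r x
    have hpNa : dot3 (pd1 (NN r) x) (pd1 r x) = -κ₁ x * A₁ r x ^ 2 := by
      rw [hN1 x hx, dot3_smul_left, ← hsq1]
    rw [he1a, hpe1a, he2a, hpe2a, hNa, hpNa]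
    ring
  rw [hT]
  show (pd1 v₁ x + pp r x * v₂ x + Ho r κ₁ x * v_n x) / A₁ r x = _
  have hpp : pp r x = dot3 (pd2 (pd1 r) x) (pd1 r x) / A₁ r x / A₂ r x := by
    show pd2 (A₁ r) x / A₂ r x = _
    rw [pd2_A1 hU hr hne1 hne2 hx]
  rw [hpp]
  show (pd1 v₁ x + _ + -κ₁ x * A₁ r x * v_n x) / A₁ r x = _
  field_simp

include horth hN1 hv₁ hv₂ hvn in
lemma pd1_thb (hx : x ∈ U) :
    pd1 (thb r κ₁ v₁ v_n) x
      = (κ₁ x * dot3 (pd1 (Vfield r v₁ v₂ v_n) x) (pd1 r x)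
          - dot3 (pd1 (pd1 (Vfield r v₁ v₂ v_n)) x) (NN r x)) / A₁ r x
        + dot3 (pd1 (Vfield r v₁ v₂ v_n) x) (NN r x)
          * dot3 (pd1 (pd1 r) x) (pd1 r x) / A₁ r x ^ 3 := by
  set Vf := Vfield r v₁ v₂ v_n with hVfdef
  have hVfS : Sm Vf U := smVf hU hr hne1 hne2 hv₁ hv₂ hvn
  have hA1 := A1_pos hne1 hx
  have hloc : ∀ y ∈ U, thb r κ₁ v₁ v_n y
      = (-(dot3 (pd1 Vf y) (NN r y))) * (A₁ r y)⁻¹ := by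
    intro y hy
    rw [thb_eq hU hr hne1 hne2 horth hN1 hv₁ hv₂ hvn hy, div_eq_mul_inv]
  rw [pd1_congr_open hU hx hloc]
  have hf : DifferentiableAt ℝ (fun y => -(dot3 (pd1 Vf y) (NN r y))) x :=
    (differentiableAt_dot3 ((hVfS.pd1 hU).dAt hU hx)
      ((smNN hU hr hne1 hne2).dAt hU hx)).neg
  have hg : DifferentiableAt ℝ (fun y => (A₁ r y)⁻¹) x :=
    ((smA1 hU hr hne1).dAt hU hx).inv (ne_of_gt hA1)
  show fderiv ℝ (fun y => (-(dot3 (pd1 Vf y) (NN r y))) * (A₁ r y)⁻¹) x (1,0) = _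
  rw [fderiv_mul_scalar hf hg]
  have e1 : fderiv ℝ (fun y => -(dot3 (pd1 Vf y) (NN r y))) x (1,0)
      = -(dot3 (pd1 (pd1 Vf) x) (NN r x) + dot3 (pd1 Vf x) (pd1 (NN r) x)) := by
    rw [fderiv_neg_comp (differentiableAt_dot3 ((hVfS.pd1 hU).dAt hU hx)
      ((smNN hU hr hne1 hne2).dAt hU hx))]
    rw [fderiv_dot3 ((hVfS.pd1 hU).dAt hU hx) ((smNN hU hr hne1 hne2).dAt hU hx)]
    rfl
  have e2 : fderiv ℝ (fun y => (A₁ r y)⁻¹) x (1,0)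
      = -(dot3 (pd1 (pd1 r) x) (pd1 r x) / A₁ r x) / A₁ r x ^ 2 :=
    pd1_A1_inv hU hr hne1 hne2 hx
  rw [e1, e2, hN1 x hx, dot3_smul_right]
  field_simp
  ring

include horth in
lemma rel_cb_ad (hx : x ∈ U) :
    dot3 (pd1 (pd1 r) x) (pd2 r x) + dot3 (pd1 r x) (pd2 (pd1 r) x) = 0 := by
  have h0 : pd1 (fun y => dot3 (pd1 r y) (pd2 r y)) x = 0 := by
    rw [pd1_congr_open hU hx (fun y hy => horth y hy) (g := fun _ => (0:ℝ))]
    show fderiv ℝ (fun _ => (0:ℝ)) x (1,0) = 0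
    rw [fderiv_fun_const]; rfl
  have hprod : pd1 (fun y => dot3 (pd1 r y) (pd2 r y)) x
      = dot3 (pd1 (pd1 r) x) (pd2 r x) + dot3 (pd1 r x) (pd1 (pd2 r) x) := by
    show fderiv ℝ _ x (1,0) = _
    rw [fderiv_dot3 ((hr.pd1 hU).dAt hU hx) ((hr.pd2 hU).dAt hU hx)]
    rfl
  rw [hprod, clairaut hU hr hne1 hne2 hx] at h0
  exact h0

end Frame4
theorem stmt_10
    (U : Set (ℝ × ℝ)) (hU : IsOpen U)
    (r : ℝ × ℝ → V3) (hr : ContDiffOn ℝ (⊤ : ℕ∞) r U)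
    (hne1 : ∀ x ∈ U, pd1 r x ≠ 0) (hne2 : ∀ x ∈ U, pd2 r x ≠ 0)
    (horth : ∀ x ∈ U, dot3 (pd1 r x) (pd2 r x) = 0)
    (κ₁ κ₂ : ℝ × ℝ → ℝ) (hκ₁ : ContDiffOn ℝ (⊤ : ℕ∞) κ₁ U) (hκ₂ : ContDiffOn ℝ (⊤ : ℕ∞) κ₂ U)
    (hN1 : ∀ x ∈ U, pd1 (NN r) x = (-κ₁ x) • pd1 r x)
    (hN2 : ∀ x ∈ U, pd2 (NN r) x = (-κ₂ x) • pd2 r x)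
    (v₁ v₂ v_n : ℝ × ℝ → ℝ)
    (hv₁ : ContDiffOn ℝ (⊤ : ℕ∞) v₁ U) (hv₂ : ContDiffOn ℝ (⊤ : ℕ∞) v₂ U) (hvn : ContDiffOn ℝ (⊤ : ℕ∞) v_n U)
 :
    ∀ x ∈ U,
      deriv (fun t => princ1 (Rt r (Vfield r v₁ v₂ v_n) t) x) 0 =
        -((pd1 (thb r κ₁ v₁ v_n) x + pp r x * psb r κ₂ v₂ v_n x) / A₁ r x) -
          eps1 r κ₁ v₁ v₂ v_n x * κ₁ x := by
  intro x hx
  have hrS : Sm r U := smOfTop hr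
  have hv₁S : Sm v₁ U := smOfTop hv₁
  have hv₂S : Sm v₂ U := smOfTop hv₂
  have hvnS : Sm v_n U := smOfTop hvn
  have hVfS : Sm (Vfield r v₁ v₂ v_n) U := smVf hU hrS hne1 hne2 hv₁S hv₂S hvnS
  have hA1 := A1_pos hne1 hx
  have hA2 := A2_pos hne2 hx
  have hab : dot3 (pd1 r x) (pd2 r x) = 0 := horth x hx
  have hba : dot3 (pd2 r x) (pd1 r x) = 0 := by rw [dot3_comm]; exact hab
  have hsq1 : A₁ r x ^ 2 = dot3 (pd1 r x) (pd1 r x) := A1_sq r x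
  have hsq2 : A₂ r x ^ 2 = dot3 (pd2 r x) (pd2 r x) := A2_sq r x
  -- rewrite both sides
  rw [deriv_princ1_explicit hU hrS hVfS hx hab (hne1 x hx) (hne2 x hx)]
  rw [pd1_thb hU hrS hne1 hne2 horth hN1 hv₁S hv₂S hvnS hx]
  rw [psb_eq hU hrS hne1 hne2 horth hN2 hv₁S hv₂S hvnS hx]
  rw [eps1_eq hU hrS hne1 hne2 horth hN1 hv₁S hv₂S hvnS hx]
  have hpp : pp r x = dot3 (pd2 (pd1 r) x) (pd1 r x) / A₁ r x / A₂ r x := by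
    show pd2 (A₁ r) x / A₂ r x = _
    rw [pd2_A1 hU hrS hne1 hne2 hx]
  rw [hpp]
  have hNc : dot3 (NN r x) (pd1 (pd1 r) x) = κ₁ x * A₁ r x ^ 2 :=
    dot3_NN_c hU hrS hne1 hne2 hN1 hx
  have hrel := rel_cb_ad hU hrS hne1 hne2 horth hx
  -- abbreviations
  set s1 := A₁ r x with hs1def
  set s2 := A₂ r x with hs2def
  set a := pd1 r x with hadef
  set b := pd2 r x with hbdef
  set AA := pd1 (Vfield r v₁ v₂ v_n) x with hAAdef
  set BB := pd2 (Vfield r v₁ v₂ v_n) x with hBBdef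
  set c := pd1 (pd1 r) x with hcdef
  set CC := pd1 (pd1 (Vfield r v₁ v₂ v_n)) x with hCCdef
  set d := pd2 (pd1 r) x with hddef
  set k1 := κ₁ x with hk1def
  set w0 := cross3 a b with hw0def
  -- sqrt value
  have hsqrt : Real.sqrt (dot3 w0 w0) = s1 * s2 := by
    rw [hw0def, lagrange3, hab, ← hsq1, ← hsq2]
    rw [show s1 ^ 2 * s2 ^ 2 - 0 ^ 2 = (s1 * s2) ^ 2 by ring]
    exact Real.sqrt_sq (by positivity)
  -- normal vector
  have hNN : NN r x = (s1⁻¹ * s2⁻¹) • w0 := NN_eq r x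
  -- w0 · c
  have hw0c : dot3 w0 c = k1 * s1 ^ 3 * s2 := by
    rw [hNN, dot3_smul_left] at hNc
    have h1 : s1 ≠ 0 := ne_of_gt hA1
    have h2 : s2 ≠ 0 := ne_of_gt hA2
    field_simp at hNc
    nlinarith [hNc]
  -- expansions
  have h1 : dot3 w0 (cross3 a BB + cross3 AA b)
      = dot3 a a * dot3 b BB + dot3 a AA * dot3 b b := by
    rw [hw0def, dot3_add_right, binet, binet, hab, hba]
    ring
  have h3 : dot3 (cross3 AA b) c
      = (dot3 AA a * dot3 w0 c - dot3 AA w0 * dot3 a c) / s1 ^ 2 := by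
    have ht := tripleL3a a b c AA
    rw [hab, ← hsq1, ← hw0def] at ht
    rw [eq_div_iff (by positivity : s1 ^ 2 ≠ 0)]
    linear_combination ht
  have h4 : dot3 (cross3 a BB) c
      = (dot3 BB b * dot3 w0 c - dot3 BB w0 * dot3 b c) / s2 ^ 2 := by
    have ht := tripleL3b a b c BB
    rw [hab, ← hsq2, ← hw0def] at ht
    rw [eq_div_iff (by positivity : s2 ^ 2 ≠ 0)]
    linear_combination ht
  have hbc : dot3 b c = -(dot3 d a) := by
    have e1 := dot3_comm b c
    have e2 := dot3_comm a d
    linarith [hrel]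
  rw [dot3_add_left, h1, h3, h4, hbc, hsqrt, hNN, dot3_smul_right, dot3_smul_right,
    dot3_smul_right, hw0c, ← hsq1, ← hsq2]
  rw [dot3_comm a c, dot3_comm a AA, dot3_comm b BB, dot3_comm w0 CC]
  have h1' : s1 ≠ 0 := ne_of_gt hA1
  have h2' : s2 ≠ 0 := ne_of_gt hA2
  field_simp
  ring
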